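/- arXiv:1601.02161 — 2 statements merged into one kernel-verified Lean document; each statement's English description precedes it below -/
import Mathlib

section
/- For b ∈ (0, 1/6), G'(v_max) = 0 and G attains its maximum over [0, 1] at v_max; by evenness, the global maximum of G over [−1, 1] equals (1−2b)²/(8−32b), attained at ±v_max. -/
/-!
With `S = √(4b² + (1 - 4b)v²)` one has `G = ((1 - 2b)S - S²) / (2(1 - 4b))`, a concave quadratic
in `S` whose maximum `(1 - 2b)² / (8 - 32b)` is attained at `S = (1 - 2b)/2`, which is exactly the
value of `S` at `v_max`. The derivative of `G` carries the factor `(1 - 2b) - 2S`, so it vanishes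
there, and `G` is even.
-/

noncomputable def S (b v : ℝ) : ℝ := √(4*b^2 + (1 - 4*b) * v^2)

noncomputable def G (b v : ℝ) : ℝ :=
  -v^2/2 + (4*b^2 + (1 - 2*b)^2 * v^2) / (2 * (4*b^2 + (1 - 2*b) * S b v))

noncomputable def vMax (b : ℝ) : ℝ := (1/2) * √((1 + 2*b) * (1 - 6*b) / (1 - 4*b))

theorem G_neg (b v : ℝ) : G b (-v) = G b v := by
  simp only [G, S, neg_sq]

section

variable {b : ℝ}

theorem two_mul_le_S (hb : b < 1/4) (v : ℝ) : 2*b ≤ S b v :=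
  Real.le_sqrt_of_sq_le (by nlinarith [sq_nonneg v])

theorem sq_S (hb : b < 1/4) (v : ℝ) : S b v ^ 2 = 4*b^2 + (1 - 4*b) * v^2 :=
  Real.sq_sqrt (by nlinarith [sq_nonneg v, sq_nonneg b])

theorem G_eq (hb0 : 0 < b) (hb : b < 1/4) (v : ℝ) :
    G b v = ((1 - 2*b) * S b v - S b v ^ 2) / (2*(1 - 4*b)) := by
  have hS := sq_S hb v
  have hden : 0 < 4*b^2 + (1 - 2*b) * S b v := by nlinarith [two_mul_le_S hb v]
  rw [G, div_add_div _ _ (by norm_num) (by positivity), div_eq_div_iff (by positivity) (by linarith)]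
  linear_combination (4*((1 - 2*b) * S b v - (1 - 4*b))) * hS

theorem G_le (hb0 : 0 < b) (hb : b < 1/4) (v : ℝ) : G b v ≤ (1 - 2*b)^2 / (8 - 32*b) := by
  rw [G_eq hb0 hb, div_le_div_iff₀ (by linarith) (by linarith)]
  nlinarith [sq_nonneg ((1 - 2*b) - 2 * S b v)]

theorem hasDerivAt_G (hb0 : 0 < b) (hb : b < 1/4) (v : ℝ) :
    HasDerivAt (G b) (((1 - 2*b) - 2 * S b v) * v / (2 * S b v)) v := by
  have hSpos : 0 < S b v := by linarith [two_mul_le_S hb v]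
  have hS : HasDerivAt (S b) ((1 - 4*b) * (2*v) / (2 * S b v)) v := by
    refine HasDerivAt.sqrt ?_ (by rw [← sq_S hb]; positivity)
    simpa using ((hasDerivAt_pow 2 v).const_mul (1 - 4*b)).const_add (4*b^2)
  have h4 : 1 - 4*b ≠ 0 := by linarith
  rw [funext (G_eq hb0 hb)]
  refine (((hS.const_mul (1 - 2*b)).sub (hS.pow 2)).div_const _).congr_deriv ?_
  simp only [Nat.cast_ofNat, Nat.add_one_sub_one, pow_one]
  rw [div_eq_div_iff (by positivity) (by positivity)]
  field_simp

theorem S_vMax (hb0 : 0 < b) (hb : b < 1/6) : S b (vMax b) = (1 - 2*b)/2 := by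
  have harg : 0 ≤ (1 + 2*b) * (1 - 6*b) / (1 - 4*b) :=
    div_nonneg (by nlinarith) (by linarith)
  have h4 : 1 - 4*b ≠ 0 := by linarith
  rw [S, vMax, mul_pow, Real.sq_sqrt harg, ← Real.sqrt_sq (by linarith : 0 ≤ (1 - 2*b)/2)]
  congr 1
  field_simp
  ring

theorem G_vMax (hb0 : 0 < b) (hb : b < 1/6) : G b (vMax b) = (1 - 2*b)^2 / (8 - 32*b) := by
  rw [G_eq hb0 (by linarith), S_vMax hb0 hb, div_eq_div_iff (by linarith) (by linarith)]
  ring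

theorem deriv_G_vMax (hb0 : 0 < b) (hb : b < 1/6) : deriv (G b) (vMax b) = 0 := by
  rw [(hasDerivAt_G hb0 (by linarith) _).deriv, S_vMax hb0 hb]
  ring

end

theorem stmt_16 (b : ℝ) (hb0 : 0 < b) (hb : b < 1/6) :
    let G : ℝ → ℝ := fun v => -v^2/2 +
      (4*b^2 + (1 - 2*b)^2 * v^2) /
        (2 * (4*b^2 + (1 - 2*b) * Real.sqrt (4*b^2 + (1 - 4*b) * v^2)))
    let vmax : ℝ := (1/2) * Real.sqrt ((1 + 2*b) * (1 - 6*b) / (1 - 4*b))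
    deriv G vmax = 0 ∧
    (∀ v ∈ Set.Icc (0:ℝ) 1, G v ≤ G vmax) ∧
    (∀ v ∈ Set.Icc (-1:ℝ) 1, G v ≤ (1 - 2*b)^2 / (8 - 32*b)) ∧
    G vmax = (1 - 2*b)^2 / (8 - 32*b) ∧
    G (-vmax) = (1 - 2*b)^2 / (8 - 32*b) := by
  change deriv (G b) (vMax b) = 0 ∧
    (∀ v ∈ Set.Icc (0:ℝ) 1, G b v ≤ G b (vMax b)) ∧
    (∀ v ∈ Set.Icc (-1:ℝ) 1, G b v ≤ (1 - 2*b)^2 / (8 - 32*b)) ∧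
    G b (vMax b) = (1 - 2*b)^2 / (8 - 32*b) ∧
    G b (-vMax b) = (1 - 2*b)^2 / (8 - 32*b)
  have hb4 : b < 1/4 := by linarith
  refine ⟨deriv_G_vMax hb0 hb, fun v _ => G_vMax hb0 hb ▸ G_le hb0 hb4 v,
    fun v _ => G_le hb0 hb4 v, G_vMax hb0 hb, ?_⟩
  rw [G_neg, G_vMax hb0 hb]
end

section
/- The general flux H(v) = v(d−v)/2 + (1−dv)(4b² + (1−2b)²v²)/(2(4b² + (1−2b)√(4b² + (1−4b)v²))) satisfies H(−v) = H(v) for all v ∈ [−1,1] if and only if d = 0, for any fixed b ∈ (0, 1/2). -/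
/-!
Writing `H v = v (d - v) / 2 + (1 - d v) q v / 2` with the even function `q = fluxRatio b`
gives `H (-v) - H v = d v (q v - 1)`. For `v² < 1` one has `q v < 1`, because
`4b² + (1 - 4b) v² - ((1 - 2b) v²)² = (1 - v²) (4b² + (1 - 2b)² v²) > 0`;
so evenness of `H` at `v = 1/2` already forces `d = 0`.
-/

open Real

noncomputable def flux (b d v : ℝ) : ℝ :=
  v * (d - v) / 2 +
    (1 - d*v) * (4*b^2 + (1 - 2*b)^2 * v^2) /
      (2 * (4*b^2 + (1 - 2*b) * √(4*b^2 + (1 - 4*b) * v^2)))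

noncomputable def fluxRatio (b v : ℝ) : ℝ :=
  (4*b^2 + (1 - 2*b)^2 * v^2) / (4*b^2 + (1 - 2*b) * √(4*b^2 + (1 - 4*b) * v^2))

theorem flux_neg_sub_flux (b d v : ℝ) :
    flux b d (-v) - flux b d v = d * v * (fluxRatio b v - 1) := by
  unfold flux fluxRatio
  rw [neg_sq]
  generalize 4*b^2 + (1 - 2*b) * √(4*b^2 + (1 - 4*b) * v^2) = D
  ring

theorem mul_sq_lt_sqrt {b v : ℝ} (hb : b ≠ 0) (hv : v^2 < 1) :
    (1 - 2*b) * v^2 < √(4*b^2 + (1 - 4*b) * v^2) := by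
  refine Real.lt_sqrt_of_sq_lt ?_
  have key : 4*b^2 + (1 - 4*b) * v^2 - ((1 - 2*b) * v^2)^2
      = (1 - v^2) * (4*b^2 + (1 - 2*b)^2 * v^2) := by ring
  have : 0 < (1 - v^2) * (4*b^2 + (1 - 2*b)^2 * v^2) := by
    have := sub_pos.mpr hv
    positivity
  linarith

theorem fluxRatio_lt_one {b v : ℝ} (hb0 : 0 < b) (hb : b < 1/2) (hv : v^2 < 1) :
    fluxRatio b v < 1 := by
  have h2b : 0 < 1 - 2*b := by linarith
  have hS := mul_sq_lt_sqrt hb0.ne' hv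
  rw [fluxRatio, div_lt_one (by positivity)]
  linarith [mul_lt_mul_of_pos_left hS h2b]

theorem stmt_17_general (b d : ℝ) (hb0 : 0 < b) (hb : b < 1/2) :
    let H : ℝ → ℝ := fun v => v * (d - v) / 2 +
      (1 - d*v) * (4*b^2 + (1 - 2*b)^2 * v^2) /
        (2 * (4*b^2 + (1 - 2*b) * Real.sqrt (4*b^2 + (1 - 4*b) * v^2)))
    (∀ v ∈ Set.Icc (-1 : ℝ) 1, H (-v) = H v) ↔ d = 0 := by
  intro H
  have hsymm (v : ℝ) : H (-v) = H v ↔ d * v * (fluxRatio b v - 1) = 0 := by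
    rw [← sub_eq_zero]
    exact iff_of_eq (congrArg (· = 0) (flux_neg_sub_flux b d v))
  constructor
  · intro h
    have hhalf := (hsymm (1/2)).1 (h _ (by norm_num))
    have hlt := fluxRatio_lt_one (v := 1/2) hb0 hb (by norm_num)
    rcases mul_eq_zero.1 hhalf with hd | hratio
    · simpa using hd
    · exact absurd (sub_eq_zero.1 hratio) hlt.ne
  · rintro rfl v -
    simp [hsymm]

theorem stmt_17 (b d : ℝ) (hb0 : 0 < b) (hb : b < 1/2) (hd : d ∈ Set.Ioo (-1 : ℝ) 1) :
    let H : ℝ → ℝ := fun v => v * (d - v) / 2 +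
      (1 - d*v) * (4*b^2 + (1 - 2*b)^2 * v^2) /
        (2 * (4*b^2 + (1 - 2*b) * Real.sqrt (4*b^2 + (1 - 4*b) * v^2)))
    (∀ v ∈ Set.Icc (-1 : ℝ) 1, H (-v) = H v) ↔ d = 0 :=
  stmt_17_general b d hb0 hb
end
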